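/- arXiv:1512.01341 — 5 statements merged into one kernel-verified Lean document; each statement's English description precedes it below -/
import Mathlib

section
/- Let n be a positive integer and let x_1, …, x_n be real numbers satisfying x_1 > -x_2 > x_3 > … > (-1)^{n+1} x_n > 0 (equivalently, the sequence (-1)^{i+1} x_i is strictly decreasing and positive). For 1 ≤ r ≤ n let s_r = Σ_{1 ≤ i_1 < i_2 < … < i_r ≤ n} x_{i_1} x_{i_2} ⋯ x_{i_r} be the r-th elementary symmetric polynomial of x_1, …, x_n. Then for every r with 1 ≤ r ≤ n: s_r > 0 if r ≡ 1 (mod 4), s_r < 0 if r ≡ 2 (mod 4), s_r < 0 if r ≡ 3 (mod 4), and s_r > 0 if r ≡ 0 (mod 4). -/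
open Finset

noncomputable def Saux (x : ℕ → ℝ) (n r : ℕ) : ℝ :=
  ∑ t ∈ (Icc 1 n).powersetCard r, ∏ i ∈ t, x i

lemma Saux_zero (x : ℕ → ℝ) (n : ℕ) : Saux x n 0 = 1 := by
  simp [Saux]

lemma Saux_eq_zero (x : ℕ → ℝ) {n r : ℕ} (h : n < r) : Saux x n r = 0 := by
  rw [Saux, powersetCard_eq_empty.mpr (by rw [Nat.card_Icc]; omega), sum_empty]

lemma Saux_succ (x : ℕ → ℝ) (n r : ℕ) (hn : 1 ≤ n) :
    Saux x n (r + 1) = Saux x (n - 1) (r + 1) + x n * Saux x (n - 1) r := by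
  have hni : n ∉ Icc 1 (n - 1) := by simp; omega
  have hI : Icc 1 n = insert n (Icc 1 (n - 1)) := by
    ext i; simp [mem_insert]; omega
  rw [Saux, hI, powersetCard_succ_insert hni, sum_union, sum_image]
  · congr 1
    rw [Saux, Finset.mul_sum]
    apply Finset.sum_congr rfl
    intro t ht
    have hnt : n ∉ t := fun h => hni ((mem_powersetCard.mp ht).1 h)
    rw [prod_insert hnt]
  · intro a ha b hb hab
    have hna : n ∉ a := fun h => hni ((mem_powersetCard.mp ha).1 h)
    have hnb : n ∉ b := fun h => hni ((mem_powersetCard.mp hb).1 h)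
    rw [← erase_insert hna, ← erase_insert hnb, hab]
  · rw [disjoint_left]
    intro t ht ht'
    have hnt : n ∉ t := fun h => hni ((mem_powersetCard.mp ht).1 h)
    obtain ⟨u, _, rfl⟩ := mem_image.mp ht'
    exact hnt (mem_insert_self _ _)

noncomputable def sg : ℕ → ℝ
  | 0 => 1
  | r + 1 => (-1) ^ r * sg r

lemma sg_succ (r : ℕ) : sg (r + 1) = (-1) ^ r * sg r := rfl

lemma sg_sq (j : ℕ) : ((-1 : ℝ) ^ j) * ((-1 : ℝ) ^ j) = 1 := by
  rw [← pow_add]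
  exact Even.neg_one_pow ⟨j, rfl⟩

lemma sg_four (r : ℕ) : sg (r + 4) = sg r := by
  have h3 : r + 4 = (r + 3) + 1 := rfl
  rw [h3, sg_succ, sg_succ, sg_succ, sg_succ]
  rw [pow_succ, pow_succ, pow_succ]
  linear_combination (sg r * ((-1 : ℝ) ^ r * (-1) ^ r + 1)) * sg_sq r

lemma sg_eq (r : ℕ) : sg r = if r % 4 = 0 ∨ r % 4 = 1 then 1 else -1 := by
  induction r using Nat.strong_induction_on with
  | _ r ih =>
    match r with
    | 0 => norm_num [sg]
    | 1 => norm_num [sg, sg_succ]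
    | 2 => norm_num [sg_succ, sg]
    | 3 => norm_num [sg_succ, sg]
    | (r + 4) =>
      rw [sg_four, ih r (by omega)]
      have h : (r + 4) % 4 = r % 4 := by omega
      rw [h]

lemma key (x : ℕ → ℝ) : ∀ n : ℕ,
    (∀ i, 1 ≤ i → i ≤ n → 0 < (-1 : ℝ) ^ (i + 1) * x i) →
    (∀ i, 1 ≤ i → i + 1 ≤ n →
      (-1 : ℝ) ^ (i + 2) * x (i + 1) < (-1 : ℝ) ^ (i + 1) * x i) →
    ∀ r, r ≤ n → 0 < sg r * Saux x n r := by
  intro n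
  induction n using Nat.strong_induction_on with
  | _ n ih =>
    intro hpos hdec r hr
    have IH : ∀ m, m < n → ∀ s : ℕ,
        (0 ≤ sg s * Saux x m s) ∧ (s ≤ m → 0 < sg s * Saux x m s) := by
      intro m hm s
      have hp : ∀ i, 1 ≤ i → i ≤ m → 0 < (-1 : ℝ) ^ (i + 1) * x i :=
        fun i h1 h2 => hpos i h1 (by omega)
      have hd : ∀ i, 1 ≤ i → i + 1 ≤ m →
          (-1 : ℝ) ^ (i + 2) * x (i + 1) < (-1 : ℝ) ^ (i + 1) * x i :=
        fun i h1 h2 => hdec i h1 (by omega)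
      have hmain := ih m hm hp hd s
      constructor
      · rcases le_or_gt s m with h | h
        · exact le_of_lt (hmain h)
        · rw [Saux_eq_zero x h, mul_zero]
      · exact hmain
    match r, hr with
    | 0, _ => rw [Saux_zero]; norm_num [sg]
    | (k + 1), hr =>
      have hn1 : 1 ≤ n := by omega
      rcases Nat.even_or_odd (n + k + 1) with hpar | hpar
      · -- n + r even: one-step recursion
        rw [Saux_succ x n k hn1]
        have h1 : 0 ≤ sg (k + 1) * Saux x (n - 1) (k + 1) := (IH (n-1) (by omega) (k+1)).1
        have h2 : 0 < sg k * Saux x (n - 1) k := (IH (n-1) (by omega) k).2 (by omega)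
        have hxn : 0 < (-1 : ℝ) ^ (n + 1) * x n := hpos n hn1 le_rfl
        have hpow : (-1 : ℝ) ^ k = (-1 : ℝ) ^ (n + 1) := by
          rw [neg_one_pow_eq_pow_mod_two, neg_one_pow_eq_pow_mod_two (n := n + 1)]
          congr 1
          rcases hpar with ⟨c, hc⟩
          omega
        have h3 : 0 < ((-1 : ℝ) ^ k * x n) * (sg k * Saux x (n - 1) k) := by
          rw [hpow]; exact mul_pos hxn h2
        have hexp : sg (k + 1) * (Saux x (n - 1) (k + 1) + x n * Saux x (n - 1) k)
            = sg (k + 1) * Saux x (n - 1) (k + 1)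
              + ((-1 : ℝ) ^ k * x n) * (sg k * Saux x (n - 1) k) := by
          rw [sg_succ]; ring
        rw [hexp]
        linarith
      · -- n + r odd: two-step recursion
        have hkn : k + 1 ≤ n - 1 := by
          rcases Nat.lt_or_ge (k + 1) n with h | h
          · omega
          · exfalso
            rcases hpar with ⟨c, hc⟩
            omega
        have hn2 : 2 ≤ n := by omega
        have hrw1 : n - 1 + 1 = n := by omega
        have hrw2 : n - 1 + 2 = n + 1 := by omega
        have hd := hdec (n - 1) (by omega) (by omega)
        rw [hrw1, hrw2] at hd
        have hxn : 0 < (-1 : ℝ) ^ (n + 1) * x n := hpos n hn1 le_rfl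
        have hx1 : 0 < (-1 : ℝ) ^ n * x (n - 1) := by
          have := hpos (n - 1) (by omega) (by omega)
          rwa [hrw1] at this
        have hpow1 : (-1 : ℝ) ^ (n + 1) = -((-1 : ℝ) ^ n) := by
          rw [pow_succ]; ring
        match k, hkn, hpar with
        | 0, hkn, hpar =>
          rw [Saux_succ x n 0 hn1, Saux_succ x (n - 1) 0 (by omega), Saux_zero, Saux_zero]
          have h1 : 0 ≤ sg 1 * Saux x (n - 1 - 1) 1 := (IH (n-1-1) (by omega) 1).1
          have hsg1 : sg 1 = 1 := by norm_num [sg_succ, sg]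
          rw [hsg1] at h1 ⊢
          have hne : (-1 : ℝ) ^ n = 1 := by
            apply Even.neg_one_pow
            rcases hpar with ⟨c, hc⟩
            exact ⟨c, by omega⟩
          rw [hpow1] at hd hxn
          rw [hne] at hd hxn hx1
          norm_num
          linarith [hd, hxn, h1]
        | (j + 1), hkn, hpar =>
          rw [Saux_succ x n (j + 1) hn1, Saux_succ x (n - 1) (j + 1) (by omega),
            Saux_succ x (n - 1) j (by omega)]
          have hA : 0 ≤ sg (j + 2) * Saux x (n - 1 - 1) (j + 2) :=
            (IH (n-1-1) (by omega) (j+2)).1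
          have hb : 0 < sg (j + 1) * Saux x (n - 1 - 1) (j + 1) :=
            (IH (n-1-1) (by omega) (j+1)).2 (by omega)
          have hc : 0 < sg j * Saux x (n - 1 - 1) j :=
            (IH (n-1-1) (by omega) j).2 (by omega)
          have f1 : sg (j + 2) = (-1 : ℝ) ^ (j + 1) * sg (j + 1) := sg_succ (j + 1)
          have f2 : sg (j + 2) = -sg j := by
            rw [f1, sg_succ, pow_succ]
            linear_combination (-sg j) * sg_sq j
          have hj : (-1 : ℝ) ^ (j + 1) = (-1 : ℝ) ^ n := by
            rw [neg_one_pow_eq_pow_mod_two, neg_one_pow_eq_pow_mod_two (n := n)]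
            congr 1
            rcases hpar with ⟨c, hc⟩
            omega
          have hf : 0 < (-1 : ℝ) ^ (j + 1) * (x (n - 1) + x n) := by
            rw [hj]
            rw [hpow1] at hd
            nlinarith [hd]
          have hB : 0 < ((-1 : ℝ) ^ (j + 1) * (x (n - 1) + x n)) *
              (sg (j + 1) * Saux x (n - 1 - 1) (j + 1)) := mul_pos hf hb
          have hneg : 0 < -(x (n - 1) * x n) := by
            have hm := mul_pos hx1 hxn
            have heq : ((-1 : ℝ) ^ n * x (n - 1)) * ((-1 : ℝ) ^ (n + 1) * x n)
                = -(x (n - 1) * x n) := by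
              rw [hpow1]
              linear_combination (-(x (n - 1) * x n)) * sg_sq n
            rwa [heq] at hm
          have hC : 0 < (-(x (n - 1) * x n)) * (sg j * Saux x (n - 1 - 1) j) :=
            mul_pos hneg hc
          have hexp : sg (j + 2) * ((Saux x (n-1-1) (j + 2) + x (n-1) * Saux x (n-1-1) (j+1))
                + x n * (Saux x (n-1-1) (j + 1) + x (n-1) * Saux x (n-1-1) j))
              = sg (j + 2) * Saux x (n-1-1) (j + 2)
                + ((-1 : ℝ) ^ (j + 1) * (x (n-1) + x n)) * (sg (j+1) * Saux x (n-1-1) (j+1))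
                + (-(x (n-1) * x n)) * (sg j * Saux x (n-1-1) j) := by
            linear_combination ((x (n-1) + x n) * Saux x (n-1-1) (j+1)) * f1
              + (x (n-1) * x n * Saux x (n-1-1) j) * f2
          rw [hexp]
          linarith

/-- **Theorem 1 of the paper.** If `x₁ > -x₂ > x₃ > ⋯ > (-1)^{n+1} xₙ > 0`, then the
`r`-th elementary symmetric polynomial `s_r` of `x₁, …, xₙ` satisfies
`s_r > 0` for `r ≡ 1, 0 (mod 4)` and `s_r < 0` for `r ≡ 2, 3 (mod 4)`. -/
theorem esymm_sign_of_alternating (n : ℕ) (hn : 1 ≤ n) (x : ℕ → ℝ)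
    (hpos : ∀ i, 1 ≤ i → i ≤ n → 0 < (-1 : ℝ) ^ (i + 1) * x i)
    (hdec : ∀ i, 1 ≤ i → i + 1 ≤ n →
      (-1 : ℝ) ^ (i + 2) * x (i + 1) < (-1 : ℝ) ^ (i + 1) * x i)
    (r : ℕ) (hr1 : 1 ≤ r) (hrn : r ≤ n) :
    (r % 4 = 1 → 0 < ∑ t ∈ (Icc 1 n).powersetCard r, ∏ i ∈ t, x i) ∧
    (r % 4 = 2 → ∑ t ∈ (Icc 1 n).powersetCard r, ∏ i ∈ t, x i < 0) ∧
    (r % 4 = 3 → ∑ t ∈ (Icc 1 n).powersetCard r, ∏ i ∈ t, x i < 0) ∧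
    (r % 4 = 0 → 0 < ∑ t ∈ (Icc 1 n).powersetCard r, ∏ i ∈ t, x i) := by
  have h := key x n hpos hdec r hrn
  refine ⟨?_, ?_, ?_, ?_⟩ <;> intro hm
  · rw [sg_eq, if_pos (Or.inr hm), one_mul] at h; exact h
  · rw [sg_eq, if_neg (by omega)] at h
    have : Saux x n r < 0 := by linarith
    exact this
  · rw [sg_eq, if_neg (by omega)] at h
    have : Saux x n r < 0 := by linarith
    exact this
  · rw [sg_eq, if_pos (Or.inl hm), one_mul] at h; exact h
end

section
/- Let n be a positive integer and let x_1, …, x_n be real numbers satisfying x_1 > -x_2 > x_3 > … > (-1)^{n+1} x_n > 0. Then for all indices i, k with 1 ≤ i < k ≤ n, the product x_i · (x_{i+1} + x_{i+2} + … + x_k) is strictly negative. -/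
open Finset

/-!
Put `y l = (-1)^(l+1) x l`, a positive, strictly decreasing sequence. Then
`(-1)^i (x_{i+1} + ⋯ + x_k) = y_{i+1} - y_{i+2} + ⋯ ± y_k` is an alternating sum of a positive
decreasing sequence, hence positive, while `x_i` has the sign of `(-1)^(i+1)`.
-/

theorem alternating_sum_Icc_mem_Ioc {R : Type*} [Ring R] [LinearOrder R] [IsStrictOrderedRing R]
    {a : ℕ → R} {m k : ℕ} (hmk : m ≤ k) (ha : StrictAntiOn a (Set.Icc m k)) (hak : 0 < a k) :
    ∑ j ∈ Icc m k, (-1) ^ (j + m) * a j ∈ Set.Ioc 0 (a m) := by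
  induction hmk using Nat.decreasingInduction with
  | self => simpa [← two_mul, pow_mul] using hak
  | of_succ m hmk ih =>
    have hsplit : ∑ j ∈ Icc m k, (-1) ^ (j + m) * a j
        = a m - ∑ j ∈ Icc (m + 1) k, (-1) ^ (j + (m + 1)) * a j := by
      rw [← add_sum_Ioc_eq_sum_Icc hmk.le, ← Icc_add_one_left_eq_Ioc, sub_eq_add_neg,
        ← sum_neg_distrib]
      simp [← two_mul, pow_mul, ← add_assoc, pow_succ]
    obtain ⟨hpos, hle⟩ := ih (ha.mono (Set.Icc_subset_Icc_left m.le_succ))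
    have hlt : a (m + 1) < a m := ha ⟨le_rfl, hmk.le⟩ ⟨m.le_succ, hmk⟩ m.lt_succ_self
    rw [hsplit]
    exact ⟨sub_pos.2 (hle.trans_lt hlt), sub_le_self _ hpos.le⟩

theorem mul_tail_sum_neg_of_alternating_general (n : ℕ) (x : ℕ → ℝ)
    (hpos : ∀ i, 1 ≤ i → i ≤ n → 0 < (-1 : ℝ) ^ (i + 1) * x i)
    (hdec : ∀ i, 1 ≤ i → i + 1 ≤ n →
      (-1 : ℝ) ^ (i + 2) * x (i + 1) < (-1 : ℝ) ^ (i + 1) * x i)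
    (i k : ℕ) (hi : 1 ≤ i) (hik : i < k) (hkn : k ≤ n) :
    x i * ∑ l ∈ Icc (i + 1) k, x l < 0 := by
  let y : ℕ → ℝ := fun l ↦ (-1) ^ (l + 1) * x l
  have hy : StrictAntiOn y (Set.Icc (i + 1) k) :=
    strictAntiOn_of_add_one_lt Set.ordConnected_Icc fun j _ hj hj1 ↦
      hdec j (hi.trans (Nat.le_of_succ_le hj.1)) (hj1.2.trans hkn)
  have htail := (alternating_sum_Icc_mem_Ioc hik hy (hpos k (by omega) hkn)).1
  have hsum : ∑ j ∈ Icc (i + 1) k, (-1) ^ (j + (i + 1)) * y j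
      = (-1) ^ i * ∑ l ∈ Icc (i + 1) k, x l := by
    rw [mul_sum]
    refine sum_congr rfl fun j _ ↦ ?_
    rw [← mul_assoc, ← pow_add, show j + (i + 1) + (j + 1) = i + 2 * (j + 1) by ring, pow_add,
      pow_mul]
    simp
  have hprod : x i * ∑ l ∈ Icc (i + 1) k, x l
      = -(y i * ((-1) ^ i * ∑ l ∈ Icc (i + 1) k, x l)) := by
    rw [show y i = (-1) ^ (i + 1) * x i from rfl, pow_succ]
    ring_nf
    simp
  rw [hprod, ← hsum]
  exact neg_neg_of_pos (mul_pos (hpos i hi (hik.le.trans hkn)) htail)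

/-- **Product-negativity fact from Appendix C of the paper.** If
`x₁ > -x₂ > x₃ > ⋯ > (-1)^{n+1} xₙ > 0`, then for all `1 ≤ i < k ≤ n` the product
`x_i · (x_{i+1} + x_{i+2} + ⋯ + x_k)` is strictly negative. -/
theorem mul_tail_sum_neg_of_alternating (n : ℕ) (hn : 1 ≤ n) (x : ℕ → ℝ)
    (hpos : ∀ i, 1 ≤ i → i ≤ n → 0 < (-1 : ℝ) ^ (i + 1) * x i)
    (hdec : ∀ i, 1 ≤ i → i + 1 ≤ n →
      (-1 : ℝ) ^ (i + 2) * x (i + 1) < (-1 : ℝ) ^ (i + 1) * x i)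
    (i k : ℕ) (hi : 1 ≤ i) (hik : i < k) (hkn : k ≤ n) :
    x i * ∑ l ∈ Icc (i + 1) k, x l < 0 :=
  mul_tail_sum_neg_of_alternating_general n x hpos hdec i k hi hik hkn
end

section
/- Let n ≥ 2 and let x_1, …, x_n be real numbers satisfying x_1 > -x_2 > x_3 > … > (-1)^{n+1} x_n > 0. Then for every k with 2 ≤ k ≤ n, the second elementary symmetric polynomial of x_1, …, x_k is strictly negative: s_2^{(k)} = Σ_{1 ≤ i < j ≤ k} x_i x_j < 0. -/
open Finset

lemma two_mul_esymm_two (x : ℕ → ℝ) (s : Finset ℕ) :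
    2 * ∑ t ∈ s.powersetCard 2, ∏ i ∈ t, x i
      = (∑ i ∈ s, x i) ^ 2 - ∑ i ∈ s, (x i) ^ 2 := by
  induction s using Finset.induction_on with
  | empty =>
    rw [show powersetCard 2 (∅:Finset ℕ) = ∅ from rfl]; simp
  | @insert a s ha ih =>
    rw [Finset.powersetCard_succ_insert ha, Finset.sum_union, Finset.sum_image]
    · have h1 : ∑ t ∈ s.powersetCard 1, ∏ i ∈ insert a t, x i
          = x a * ∑ i ∈ s, x i := by
        rw [Finset.powersetCard_one, Finset.sum_map, Finset.mul_sum]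
        refine Finset.sum_congr rfl fun i hi => ?_
        have hia : a ≠ i := by rintro rfl; exact ha hi
        simp [Finset.prod_insert, hia]
      rw [h1, Finset.sum_insert ha, Finset.sum_insert ha]
      ring_nf
      ring_nf at ih
      linarith [ih]
    · intro t ht u hu htu
      have hta : a ∉ t := fun h => ha ((Finset.mem_powersetCard.1 ht).1 h)
      have hua : a ∉ u := fun h => ha ((Finset.mem_powersetCard.1 hu).1 h)
      have := congrArg (fun v => Finset.erase v a) htu
      simpa [Finset.erase_insert hta, Finset.erase_insert hua] using this
    · rw [Finset.disjoint_left]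
      intro t ht ht'
      have hta : a ∉ t := fun h => ha ((Finset.mem_powersetCard.1 ht).1 h)
      obtain ⟨u, hu, rfl⟩ := Finset.mem_image.1 ht'
      exact hta (Finset.mem_insert_self a u)

/-- **Case `r = 2` of the induction in Appendix C of the paper.** If `n ≥ 2` and
`x₁ > -x₂ > x₃ > ⋯ > (-1)^{n+1} xₙ > 0`, then for every `2 ≤ k ≤ n` the second
elementary symmetric polynomial of `x₁, …, x_k` is strictly negative:
`s₂^{(k)} = Σ_{1 ≤ i < j ≤ k} x_i x_j < 0`. -/
theorem esymm_two_neg_of_alternating (n : ℕ) (hn : 2 ≤ n) (x : ℕ → ℝ)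
    (hpos : ∀ i, 1 ≤ i → i ≤ n → 0 < (-1 : ℝ) ^ (i + 1) * x i)
    (hdec : ∀ i, 1 ≤ i → i + 1 ≤ n →
      (-1 : ℝ) ^ (i + 2) * x (i + 1) < (-1 : ℝ) ^ (i + 1) * x i)
    (k : ℕ) (hk2 : 2 ≤ k) (hkn : k ≤ n) :
    ∑ t ∈ (Icc 1 k).powersetCard 2, ∏ i ∈ t, x i < 0 := by
  set a : ℕ → ℝ := fun i => (-1 : ℝ) ^ (i + 1) * x i with ha
  set S : ℕ → ℝ := fun k => ∑ i ∈ Icc 1 k, x i with hS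
  have hx : ∀ i, x i = (-1 : ℝ) ^ (i + 1) * a i := by
    intro i
    simp [ha, ← mul_assoc, ← pow_add, ← two_mul, pow_mul, neg_one_sq]
  -- partial sum invariant
  have key : ∀ m, 1 ≤ m → m ≤ n →
      0 < S m ∧ S m ≤ x 1 ∧ (2 ≤ m → S m < x 1) ∧
      (Odd m → a m ≤ S m) ∧ (Even m → S m ≤ x 1 - a m) := by
    intro m hm1
    induction m, hm1 using Nat.le_induction with
    | base =>
      intro _
      have hS1 : S 1 = x 1 := by simp [hS]
      have ha1 : a 1 = x 1 := by simp [ha]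
      have h1 : 0 < a 1 := hpos 1 le_rfl (by omega)
      refine ⟨by simp [hS1, ← ha1, h1], le_of_eq hS1, by omega, fun _ => by simp [hS1, ha1], ?_⟩
      intro h; exact absurd h (by decide)
    | succ m hm ih =>
      intro hmn
      obtain ⟨h0, hle, hlt, hodd, heven⟩ := ih (by omega)
      have hSucc : S (m + 1) = S m + x (m + 1) := by
        rw [hS]; exact Finset.sum_Icc_succ_top (by omega) x
      have ham1 : 0 < a (m + 1) := hpos (m + 1) (by omega) hmn
      have hdm : a (m + 1) < a m := hdec m (by omega) hmn
      rcases Nat.even_or_odd m with he | ho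
      · -- m even, so x (m+1) = a (m+1)
        have hxm : x (m + 1) = a (m + 1) := by
          rw [hx (m + 1)]
          rcases he with ⟨c, hc⟩
          subst hc
          rw [show c + c + 1 + 1 = 2 * (c + 1) by ring, pow_mul]
          simp
        have hm2 : 2 ≤ m := by
          rcases Nat.lt_or_ge m 2 with h | h
          · interval_cases m; exact absurd he (by decide)
          · exact h
        have hub : S m ≤ x 1 - a m := heven he
        refine ⟨by nlinarith, by nlinarith, fun _ => by nlinarith, fun _ => by nlinarith, ?_⟩
        intro hcon
        exact absurd (Nat.even_add_one.1 hcon) (not_not.2 he)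
      · -- m odd, x (m+1) = -a(m+1)
        have hxm : x (m + 1) = -a (m + 1) := by
          rw [hx (m + 1)]
          rcases ho with ⟨c, hc⟩
          subst hc
          rw [show 2 * c + 1 + 1 + 1 = 2 * (c + 1) + 1 by ring, pow_succ, pow_mul]
          simp
        have hlb : a m ≤ S m := hodd ho
        refine ⟨by nlinarith, by nlinarith, fun _ => by nlinarith, ?_, fun _ => by nlinarith⟩
        intro hcon
        exact absurd ho (Nat.odd_add_one.mp hcon)
  obtain ⟨h0, hle, hlt, -, -⟩ := key k (by omega) hkn
  have hSk : S k < x 1 := hlt hk2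
  have hx1 : 0 < x 1 := by
    have := hpos 1 le_rfl (by omega)
    simpa using this
  have hsq : (S k) ^ 2 < (x 1) ^ 2 := by nlinarith
  have hx2 : x 2 ≠ 0 := by
    have := hpos 2 (by omega) (by omega)
    intro h; rw [h] at this; simp at this
  have hQ : (x 1) ^ 2 + (x 2) ^ 2 ≤ ∑ i ∈ Icc 1 k, (x i) ^ 2 := by
    have : ({1, 2} : Finset ℕ) ⊆ Icc 1 k := by
      intro i hi
      simp only [Finset.mem_insert, Finset.mem_singleton] at hi
      rcases hi with rfl | rfl <;> simp [Finset.mem_Icc] <;> omega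
    calc (x 1) ^ 2 + (x 2) ^ 2 = ∑ i ∈ ({1, 2} : Finset ℕ), (x i) ^ 2 := by norm_num
      _ ≤ _ := Finset.sum_le_sum_of_subset_of_nonneg this (fun i _ _ => sq_nonneg _)
  have hid := two_mul_esymm_two x (Icc 1 k)
  nlinarith [sq_nonneg (x 2), hx2, sq_abs (x 2)]
end

section
/- Let k ≥ 2 and let x_1, …, x_k be arbitrary real numbers. For 0 ≤ r ≤ j ≤ k define s_r^{(j)} = Σ_{1 ≤ i_1 < … < i_r ≤ j} x_{i_1} ⋯ x_{i_r} (the r-th elementary symmetric polynomial of x_1, …, x_j, with the convention s_0^{(j)} = 1). Then for every r with 2 ≤ r ≤ k, the following recursion holds: s_r^{(k)} = Σ_{j=r-1}^{k-1} s_{r-2}^{(j-1)} · x_j · (x_{j+1} + x_{j+2} + … + x_k). -/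
open Finset

noncomputable def S (x : ℕ → ℝ) (r j : ℕ) : ℝ :=
  ∑ t ∈ (Icc 1 j).powersetCard r, ∏ i ∈ t, x i

lemma S_zero (x : ℕ → ℝ) (j : ℕ) : S x 0 j = 1 := by
  simp [S, powersetCard_zero]

lemma S_big (x : ℕ → ℝ) {r j : ℕ} (h : j < r) : S x r j = 0 := by
  rw [S, powersetCard_eq_empty.2 (by simpa using h), sum_empty]

lemma S_rec (x : ℕ → ℝ) (r j : ℕ) :
    S x (r + 1) (j + 1) = S x (r + 1) j + x (j + 1) * S x r j := by
  have hnot : j + 1 ∉ Icc 1 j := by simp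
  have : Icc 1 (j + 1) = insert (j + 1) (Icc 1 j) := by
    ext a; simp only [mem_Icc, mem_insert]; omega
  rw [S, this, powersetCard_succ_insert hnot, sum_union, sum_image]
  · rw [S, S, mul_comm, sum_mul]
    congr 1
    refine sum_congr rfl fun t ht => ?_
    rw [prod_insert (fun h => hnot ((mem_powersetCard.1 ht).1 h)), mul_comm]
  · intro a ha b hb hab
    have ha' : j + 1 ∉ a := fun h => hnot ((mem_powersetCard.1 ha).1 h)
    have hb' : j + 1 ∉ b := fun h => hnot ((mem_powersetCard.1 hb).1 h)
    rw [← erase_insert ha', ← erase_insert hb', hab]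
  · rw [disjoint_left]
    intro t ht ht'
    obtain ⟨u, hu, rfl⟩ := mem_image.1 ht'
    exact (fun h => hnot ((mem_powersetCard.1 ht).1 h)) (mem_insert_self _ _)

lemma lemA (x : ℕ → ℝ) (r : ℕ) : ∀ m, S x (r + 1) m = ∑ j ∈ Icc (r + 1) m, S x r (j - 1) * x j := by
  intro m
  induction m with
  | zero => rw [S_big x (by omega), Icc_eq_empty (by omega), sum_empty]
  | succ m ih =>
    rcases le_or_gt (r + 1) (m + 1) with h | h
    · rw [S_rec, ih, Finset.sum_Icc_succ_top h]
      simp only [Nat.add_sub_cancel]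
      ring
    · rw [S_big x (by omega), Icc_eq_empty (by omega), sum_empty]

/-- **General recursion of Appendix C of the paper.** For arbitrary real numbers
`x₁, …, x_k` with `k ≥ 2` and `2 ≤ r ≤ k`, the partial elementary symmetric
polynomials `s_r^{(j)} = Σ_{1 ≤ i₁ < ⋯ < i_r ≤ j} x_{i₁} ⋯ x_{i_r}` (with
`s₀^{(j)} = 1`) satisfy
`s_r^{(k)} = Σ_{j=r-1}^{k-1} s_{r-2}^{(j-1)} · x_j · (x_{j+1} + ⋯ + x_k)`. -/
theorem esymm_recursion (k : ℕ) (hk : 2 ≤ k) (x : ℕ → ℝ)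
    (r : ℕ) (hr2 : 2 ≤ r) (hrk : r ≤ k) :
    ∑ t ∈ (Icc 1 k).powersetCard r, ∏ i ∈ t, x i =
      ∑ j ∈ Icc (r - 1) (k - 1),
        (∑ t ∈ (Icc 1 (j - 1)).powersetCard (r - 2), ∏ i ∈ t, x i) * x j *
          ∑ l ∈ Icc (j + 1) k, x l := by
  obtain ⟨a, rfl⟩ := Nat.exists_eq_add_of_le hr2
  have e1 : 2 + a - 1 = a + 1 := by omega
  have e2 : 2 + a - 2 = a := by omega
  have e3 : 2 + a = a + 1 + 1 := by omega
  rw [e1, e2, e3]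
  show S x (a + 1 + 1) k = _
  calc S x (a + 1 + 1) k
      = ∑ j' ∈ Icc (a + 2) k, (∑ j ∈ Icc (a + 1) (j' - 1), S x a (j - 1) * x j) * x j' := by
        rw [lemA]
        exact sum_congr rfl fun j' _ => by rw [lemA]
    _ = ∑ j' ∈ Icc (a + 2) k,
          ∑ j ∈ Icc (a + 1) (k - 1), (if j + 1 ≤ j' then S x a (j - 1) * x j * x j' else 0) := by
        refine sum_congr rfl fun j' hj' => ?_
        rw [mem_Icc] at hj'
        rw [sum_mul, ← sum_filter]
        refine sum_congr ?_ fun j _ => rfl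
        ext j
        simp only [mem_filter, mem_Icc]
        omega
    _ = ∑ j ∈ Icc (a + 1) (k - 1),
          ∑ j' ∈ Icc (a + 2) k, (if j + 1 ≤ j' then S x a (j - 1) * x j * x j' else 0) :=
        sum_comm
    _ = ∑ j ∈ Icc (a + 1) (k - 1), S x a (j - 1) * x j * ∑ l ∈ Icc (j + 1) k, x l := by
        refine sum_congr rfl fun j hj => ?_
        rw [mem_Icc] at hj
        rw [← sum_filter]
        have : (Icc (a + 2) k).filter (fun j' => j + 1 ≤ j') = Icc (j + 1) k := by
          ext j'
          simp only [mem_filter, mem_Icc]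
          omega
        rw [this, mul_sum]
end

section
/- Let n be a positive integer, let x_1, …, x_n be real numbers satisfying x_1 > -x_2 > x_3 > … > (-1)^{n+1} x_n > 0, and for 0 ≤ r ≤ k ≤ n let s_r^{(k)} = Σ_{1 ≤ i_1 < … < i_r ≤ k} x_{i_1} ⋯ x_{i_r} with s_0^{(k)} = 1. Fix r with 2 ≤ r ≤ n and suppose that for some ε ∈ {+1, −1}, ε · s_{r-2}^{(j)} > 0 holds for every j with r−2 ≤ j ≤ n (when r = 2 this holds with ε = +1 since s_0^{(j)} = 1). Then for every k with r ≤ k ≤ n one has ε · s_r^{(k)} < 0; that is, each s_r^{(k)} is nonzero with sign opposite to the common sign of the s_{r-2}^{(j)}. -/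
/-!
Splitting off the two largest indices of a term of `s_{r+2}^{(k)}` (`partialEsymm x (r + 2) k`)
gives `s_{r+2}^{(k)} = ∑ⱼ s_r^{(j-1)} · x_j (x_{j+1} + ⋯ + x_k)`. Since the `x_i` alternate in
sign with strictly decreasing absolute values, every tail `x_{j+1} + ⋯ + x_k` has the sign of
`x_{j+1}`, so `x_j (x_{j+1} + ⋯ + x_k) < 0` for `j < k`. Hence every summand has sign opposite to
the common sign of the `s_r^{(j)}`, and the summand `j = r + 1` is nonzero.
-/

open Finset

theorem Multiset.esymm_cons {R : Type*} [CommSemiring R] (a : R) (s : Multiset R) (r : ℕ) :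
    (a ::ₘ s).esymm (r + 1) = s.esymm (r + 1) + a * s.esymm r := by
  simp only [Multiset.esymm, Multiset.powersetCard_cons, Multiset.map_add, Multiset.sum_add,
    Multiset.map_map, Function.comp_def, Multiset.prod_cons, Multiset.sum_map_mul_left]

section PartialEsymm

variable {R : Type*} [CommSemiring R] (x : ℕ → R)

noncomputable def partialEsymm (r k : ℕ) : R := ((Icc 1 k).val.map x).esymm r

theorem partialEsymm_of_lt {r k : ℕ} (h : k < r) : partialEsymm x r k = 0 := by
  rw [partialEsymm, Multiset.esymm, Multiset.powersetCard_eq_empty _ (by simpa using h)]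
  simp

theorem partialEsymm_succ_succ (r k : ℕ) :
    partialEsymm x (r + 1) (k + 1) =
      partialEsymm x (r + 1) k + x (k + 1) * partialEsymm x r k := by
  rw [partialEsymm, ← insert_Icc_right_eq_Icc_add_one (by omega),
    insert_val_of_notMem (by simp), Multiset.map_cons, Multiset.esymm_cons]
  rfl

theorem partialEsymm_succ_eq_sum (r k : ℕ) :
    partialEsymm x (r + 1) k = ∑ m ∈ Icc 1 k, x m * partialEsymm x r (m - 1) := by
  induction k with
  | zero => simp [partialEsymm_of_lt]
  | succ k ih => rw [partialEsymm_succ_succ, ih, sum_Icc_succ_top (by omega), Nat.add_sub_cancel]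

theorem partialEsymm_add_two_eq_sum (r k : ℕ) :
    partialEsymm x (r + 2) k =
      ∑ j ∈ Icc 1 k, partialEsymm x r (j - 1) * (x j * ∑ m ∈ Icc (j + 1) k, x m) := by
  simp_rw [partialEsymm_succ_eq_sum x (r + 1), partialEsymm_succ_eq_sum x r, mul_sum]
  refine (sum_comm' fun m j => ?_).trans
    (sum_congr rfl fun j _ => sum_congr rfl fun m _ => by ring)
  simp only [mem_Icc]
  omega

end PartialEsymm

section Alternating

variable {R : Type*} [CommRing R] [LinearOrder R] [IsStrictOrderedRing R] {x : ℕ → R} {n : ℕ}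

theorem alternating_tail_sum_pos_and_le
    (hpos : ∀ i, 1 ≤ i → i ≤ n → 0 < (-1 : R) ^ (i + 1) * x i)
    (hdec : ∀ i, 1 ≤ i → i + 1 ≤ n →
      (-1 : R) ^ (i + 2) * x (i + 1) < (-1 : R) ^ (i + 1) * x i)
    {j k : ℕ} (hj : 1 ≤ j) (hjk : j ≤ k) (hkn : k ≤ n) :
    0 < (-1 : R) ^ (j + 1) * ∑ m ∈ Icc j k, x m ∧
      (-1 : R) ^ (j + 1) * ∑ m ∈ Icc j k, x m ≤ (-1 : R) ^ (j + 1) * x j := by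
  obtain ⟨d, rfl⟩ := Nat.exists_eq_add_of_le hjk
  induction d generalizing j with
  | zero => simpa using hpos j hj hkn
  | succ d ih =>
    obtain ⟨ih_pos, ih_le⟩ := ih (j := j + 1) (by omega) (by omega) (by omega)
    have hflip : (-1 : R) ^ (j + 1 + 1) = -(-1) ^ (j + 1) := by rw [pow_succ, mul_neg_one]
    have hstep := hdec j hj (by omega)
    rw [show j + (d + 1) = j + 1 + d by omega, ← insert_Icc_add_one_left_eq_Icc (by omega),
      sum_insert (by simp), mul_add]
    rw [hflip, neg_mul] at ih_pos ih_le hstep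
    constructor <;> linarith

theorem mul_tail_sum_neg
    (hpos : ∀ i, 1 ≤ i → i ≤ n → 0 < (-1 : R) ^ (i + 1) * x i)
    (hdec : ∀ i, 1 ≤ i → i + 1 ≤ n →
      (-1 : R) ^ (i + 2) * x (i + 1) < (-1 : R) ^ (i + 1) * x i)
    {j k : ℕ} (hj : 1 ≤ j) (hjk : j < k) (hkn : k ≤ n) :
    x j * ∑ m ∈ Icc (j + 1) k, x m < 0 := by
  have hsign : (-1 : R) ^ (j + 1) * (-1) ^ (j + 1 + 1) = -1 := by
    rw [← pow_add]
    exact Odd.neg_one_pow ⟨j + 1, by ring⟩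
  have hx := hpos j hj (by omega)
  have htail := (alternating_tail_sum_pos_and_le hpos hdec (j := j + 1) (by omega) hjk hkn).1
  calc x j * ∑ m ∈ Icc (j + 1) k, x m
      = -(((-1) ^ (j + 1) * x j) * ((-1) ^ (j + 1 + 1) * ∑ m ∈ Icc (j + 1) k, x m)) := by
        linear_combination (x j * ∑ m ∈ Icc (j + 1) k, x m) * hsign
    _ < 0 := neg_neg_of_pos (mul_pos hx htail)

theorem partialEsymm_add_two_sign
    (hpos : ∀ i, 1 ≤ i → i ≤ n → 0 < (-1 : R) ^ (i + 1) * x i)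
    (hdec : ∀ i, 1 ≤ i → i + 1 ≤ n →
      (-1 : R) ^ (i + 2) * x (i + 1) < (-1 : R) ^ (i + 1) * x i)
    {r k : ℕ} {ε : R} (hind : ∀ j, r ≤ j → j < k → 0 < ε * partialEsymm x r j)
    (hrk : r + 2 ≤ k) (hkn : k ≤ n) :
    ε * partialEsymm x (r + 2) k < 0 := by
  have hterm_neg : ∀ j, r + 1 ≤ j → j < k →
      ε * (partialEsymm x r (j - 1) * (x j * ∑ m ∈ Icc (j + 1) k, x m)) < 0 := by
    intro j hrj hjk
    rw [← mul_assoc]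
    exact mul_neg_of_pos_of_neg (hind _ (by omega) (by omega))
      (mul_tail_sum_neg hpos hdec (by omega) hjk hkn)
  rw [partialEsymm_add_two_eq_sum, mul_sum]
  refine sum_neg' (fun j hj => ?_)
    ⟨r + 1, mem_Icc.2 ⟨by omega, by omega⟩, hterm_neg _ le_rfl (by omega)⟩
  rw [mem_Icc] at hj
  rcases lt_or_ge j (r + 1) with hjr | hrj
  · simp [partialEsymm_of_lt x (show j - 1 < r by omega)]
  rcases hj.2.lt_or_eq with hjk | rfl
  · exact (hterm_neg j hrj hjk).le
  · simp

end Alternating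

theorem esymm_sign_flip_step_general (n : ℕ) (x : ℕ → ℝ)
    (hpos : ∀ i, 1 ≤ i → i ≤ n → 0 < (-1 : ℝ) ^ (i + 1) * x i)
    (hdec : ∀ i, 1 ≤ i → i + 1 ≤ n →
      (-1 : ℝ) ^ (i + 2) * x (i + 1) < (-1 : ℝ) ^ (i + 1) * x i)
    (r : ℕ) (hr2 : 2 ≤ r)
    (ε : ℝ)
    (hind : ∀ j, r - 2 ≤ j → j ≤ n →
      0 < ε * ∑ t ∈ (Icc 1 j).powersetCard (r - 2), ∏ i ∈ t, x i)
    (k : ℕ) (hrk : r ≤ k) (hkn : k ≤ n) :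
    ε * ∑ t ∈ (Icc 1 k).powersetCard r, ∏ i ∈ t, x i < 0 := by
  obtain ⟨s, rfl⟩ := Nat.exists_eq_add_of_le' hr2
  simp only [Nat.add_sub_cancel, ← esymm_map_val] at hind ⊢
  exact partialEsymm_add_two_sign hpos hdec (fun j hj hjk => hind j hj (by omega)) hrk hkn

/-- **Sign-flipping inductive step of Appendix C of the paper.** Suppose
`x₁ > -x₂ > x₃ > ⋯ > (-1)^{n+1} xₙ > 0`, let
`s_r^{(k)} = Σ_{1 ≤ i₁ < ⋯ < i_r ≤ k} x_{i₁} ⋯ x_{i_r}` (so `s₀^{(k)} = 1`),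
fix `2 ≤ r ≤ n`, and suppose `ε ∈ {+1, -1}` is such that `ε · s_{r-2}^{(j)} > 0`
for every `r - 2 ≤ j ≤ n`. Then `ε · s_r^{(k)} < 0` for every `r ≤ k ≤ n`. -/
theorem esymm_sign_flip_step (n : ℕ) (hn : 1 ≤ n) (x : ℕ → ℝ)
    (hpos : ∀ i, 1 ≤ i → i ≤ n → 0 < (-1 : ℝ) ^ (i + 1) * x i)
    (hdec : ∀ i, 1 ≤ i → i + 1 ≤ n →
      (-1 : ℝ) ^ (i + 2) * x (i + 1) < (-1 : ℝ) ^ (i + 1) * x i)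
    (r : ℕ) (hr2 : 2 ≤ r) (hrn : r ≤ n)
    (ε : ℝ) (hε : ε = 1 ∨ ε = -1)
    (hind : ∀ j, r - 2 ≤ j → j ≤ n →
      0 < ε * ∑ t ∈ (Icc 1 j).powersetCard (r - 2), ∏ i ∈ t, x i)
    (k : ℕ) (hrk : r ≤ k) (hkn : k ≤ n) :
    ε * ∑ t ∈ (Icc 1 k).powersetCard r, ∏ i ∈ t, x i < 0 :=
  esymm_sign_flip_step_general n x hpos hdec r hr2 ε hind k hrk hkn
end
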